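/- arXiv:2502.13099 — 2 statements merged into one kernel-verified Lean document; each statement's English description precedes it below -/
import Mathlib

section
/- Let G be an abelian group written additively, let n ≥ 1, let P : G → ℝ be a homogeneous polynomial of degree n on G, and let MP : Gⁿ → ℝ be its n-polarization. Then for all a₁,…,a_n, b₁,…,b_n ∈ G, MP(a₁ − b₁, …, a_n − b_n) = (1/n!) · Σ_{I ⊆ {1,…,n}} (−1)^{|J|} · P( Σ_{i∈I} aᵢ + Σ_{j∈J} b_j ), where the sum runs over all subsets I of {1,…,n} (including the empty set) and J = {1,…,n} \ I. -/
/-!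
By multilinearity, `P (∑ i, cᵢ) = MP (∑ cᵢ, …, ∑ cᵢ)` is the sum of `MP (c ∘ r)` over all maps
`r : Fin n → Fin n`. Fix `r` and take `cᵢ` to be `aᵢ` for `i ∈ I` and `bᵢ` otherwise. If some
index `i` is missed by `r`, the terms for `I` and `I ∪ {i}` cancel in the alternating sum over
`I`. If `r` is a permutation, symmetry removes it and multilinearity collapses the alternating
sum to `MP (a - b)`. The `n!` permutations give the factor `n!`.
-/

/-- A function `P : G → ℝ` on an abelian group `G` is a *homogeneous polynomial
of degree `n` on `G`* if for every tuple `(a₁, …, a_m)` of elements of `G` there is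
a homogeneous real polynomial `p` of degree `n` in `m` variables such that
`P (k₁ • a₁ + ⋯ + k_m • a_m) = p (k₁, …, k_m)` for all nonnegative integers `kᵢ`. -/
def IsHomogeneousPolynomialOn {G : Type*} [AddCommMonoid G] (n : ℕ) (P : G → ℝ) : Prop :=
  ∀ (m : ℕ) (a : Fin m → G), ∃ p : MvPolynomial (Fin m) ℝ, p.IsHomogeneous n ∧
    ∀ k : Fin m → ℕ, P (∑ i, k i • a i) = MvPolynomial.eval (fun i => (k i : ℝ)) p

/-- An *`n`-polarization* of `P : G → ℝ` is a function `MP : Gⁿ → ℝ` agreeing with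
`P` on the diagonal, symmetric under permutations of its arguments, and additive in
each argument. -/
def IsPolarization {G : Type*} [AddCommMonoid G] (n : ℕ) (P : G → ℝ)
    (MP : (Fin n → G) → ℝ) : Prop :=
  (∀ a : G, MP (fun _ => a) = P a) ∧
  (∀ (σ : Equiv.Perm (Fin n)) (a : Fin n → G), MP (a ∘ σ) = MP a) ∧
  (∀ (a : Fin n → G) (i : Fin n) (x y : G),
    MP (Function.update a i (x + y)) =
      MP (Function.update a i x) + MP (Function.update a i y))

open Finset Function

namespace Finset

variable {ι N : Type*} [Fintype ι] [DecidableEq ι] [AddCommGroup N]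

theorem sum_neg_one_pow_card_compl_zsmul_eq_zero {g : Finset ι → N} (i : ι)
    (hg : ∀ I, i ∉ I → g (insert i I) = g I) :
    ∑ I : Finset ι, (-1 : ℤ) ^ #Iᶜ • g I = 0 := by
  rw [← powerset_univ, ← insert_erase (mem_univ i), sum_powerset_insert (notMem_erase i univ),
    ← sum_add_distrib]
  refine sum_eq_zero fun I hI => ?_
  have hiI : i ∉ I := fun h => notMem_erase i univ (mem_powerset.mp hI h)
  have hcard : #Iᶜ = #(insert i I)ᶜ + 1 := by
    rw [compl_insert, card_erase_add_one (by simpa using hiI)]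
  rw [hg I hiI, hcard, pow_succ, mul_neg_one, neg_smul, neg_add_cancel]

end Finset

namespace MultilinearMap

variable {ι M N : Type*} [DecidableEq ι] [AddCommGroup M] [AddCommGroup N]

def ofMapUpdateAdd (f : (ι → M) → N)
    (hf : ∀ (m : ι → M) (i : ι) (x y : M),
      f (update m i (x + y)) = f (update m i x) + f (update m i y)) :
    MultilinearMap ℤ (fun _ : ι => M) N where
  toFun := f
  -- The fields quantify over all `DecidableEq ι` instances; `convert` matches them with ours.
  map_update_add' := by
    intro _ m i x y
    convert hf m i x y
  map_update_smul' := by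
    intro _ m i c x
    exact map_zsmul (AddMonoidHom.mk' (fun z => f (update m i z)) (by convert hf m i)) c x

@[simp]
theorem coe_ofMapUpdateAdd (f : (ι → M) → N) (hf) :
    ⇑(ofMapUpdateAdd (ι := ι) f hf) = f := rfl

variable [Fintype ι]

theorem sum_neg_one_pow_card_compl_zsmul_map_piecewise
    (F : MultilinearMap ℤ (fun _ : ι => M) N) (u v : ι → M) :
    ∑ S : Finset ι, (-1 : ℤ) ^ #Sᶜ • F (S.piecewise u v) = F (u - v) := by
  rw [sub_eq_add_neg, F.map_add_univ]
  refine sum_congr rfl fun S _ => ?_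
  have hneg : S.piecewise u (-v) = Sᶜ.piecewise (fun i => (-1 : ℤ) • S.piecewise u v i)
      (S.piecewise u v) := by
    ext i
    by_cases hi : i ∈ S <;> simp [hi]
  rw [hneg, F.map_piecewise_smul, prod_const]

theorem sum_neg_one_pow_card_compl_zsmul_map_const_sum_piecewise
    (F : MultilinearMap ℤ (fun _ : ι => M) N)
    (hF : ∀ (σ : Equiv.Perm ι) (m : ι → M), F (m ∘ σ) = F m) (a b : ι → M) :
    ∑ I : Finset ι, (-1 : ℤ) ^ #Iᶜ • F (fun _ => ∑ i, I.piecewise a b i) =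
      (Fintype.card ι).factorial • F (a - b) := by
  have hexpand : ∀ I : Finset ι, F (fun _ => ∑ i, I.piecewise a b i) =
      ∑ r : ι → ι, F (fun j => I.piecewise a b (r j)) :=
    fun I => F.map_sum fun _ => I.piecewise a b
  simp_rw [hexpand, smul_sum]
  rw [sum_comm, ← Fintype.sum_of_injective (fun σ : Equiv.Perm ι => ⇑σ) DFunLike.coe_injective
    (fun _ => F (a - b)), sum_const, card_univ, Fintype.card_perm]
  · intro r hr
    have hsurj : ¬ Surjective r := fun h =>
      hr ⟨Equiv.ofBijective r (Finite.surjective_iff_bijective.mp h), rfl⟩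
    obtain ⟨i, hi⟩ := not_forall.mp hsurj
    refine sum_neg_one_pow_card_compl_zsmul_eq_zero i fun I hiI => ?_
    congr 1
    ext j
    exact piecewise_insert_of_ne _ _ _ fun (h : r j = i) => hi ⟨j, h⟩
  · intro σ
    simp_rw [← sum_neg_one_pow_card_compl_zsmul_map_piecewise F a b]
    exact sum_congr rfl fun I _ => congrArg _ (hF σ (I.piecewise a b)).symm

end MultilinearMap

theorem polarization_on_differences_general {G : Type*} [AddCommGroup G] (n : ℕ)
    (P : G → ℝ)
    (MP : (Fin n → G) → ℝ) (hMP : IsPolarization n P MP) :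
    ∀ a b : Fin n → G,
      MP (fun i => a i - b i) =
        (n.factorial : ℝ)⁻¹ *
          ∑ I : Finset (Fin n), (-1 : ℝ) ^ (Iᶜ.card) *
            P ((∑ i ∈ I, a i) + ∑ j ∈ Iᶜ, b j) := by
  intro a b
  obtain ⟨hdiag, hsymm, hadd⟩ := hMP
  have key := MultilinearMap.sum_neg_one_pow_card_compl_zsmul_map_const_sum_piecewise
    (MultilinearMap.ofMapUpdateAdd MP hadd) hsymm a b
  have hsum : ∀ I : Finset (Fin n),
      P ((∑ i ∈ I, a i) + ∑ j ∈ Iᶜ, b j) = MP (fun _ => ∑ i, I.piecewise a b i) := by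
    intro I
    rw [hdiag, sum_piecewise, univ_inter, compl_eq_univ_sdiff]
  simp only [MultilinearMap.coe_ofMapUpdateAdd, Fintype.card_fin, zsmul_eq_mul, nsmul_eq_mul] at key
  push_cast at key
  simp_rw [hsum, key, inv_mul_cancel_left₀ (by positivity : (n.factorial : ℝ) ≠ 0)]
  rfl

/-- For a degree-`n` homogeneous polynomial `P` on an abelian group `G` with
`n`-polarization `MP`, and any `a₁, …, a_n, b₁, …, b_n ∈ G`:
`MP (a₁ - b₁, …, a_n - b_n)
  = (1/n!) ∑_{I ⊆ {1,…,n}} (-1)^{|J|} P (∑_{i ∈ I} aᵢ + ∑_{j ∈ J} b_j)`,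
where `J` is the complement of `I`. -/
theorem polarization_on_differences {G : Type*} [AddCommGroup G] (n : ℕ) (hn : 1 ≤ n)
    (P : G → ℝ) (hP : IsHomogeneousPolynomialOn n P)
    (MP : (Fin n → G) → ℝ) (hMP : IsPolarization n P MP) :
    ∀ a b : Fin n → G,
      MP (fun i => a i - b i) =
        (n.factorial : ℝ)⁻¹ *
          ∑ I : Finset (Fin n), (-1 : ℝ) ^ (Iᶜ.card) *
            P ((∑ i ∈ I, a i) + ∑ j ∈ Iᶜ, b j) :=
  polarization_on_differences_general n P MP hMP
end

section
/- Let G be an abelian group written additively, let n ≥ 1, and let P : G → ℝ be a homogeneous polynomial of degree n on G. Then for all a, b ∈ G, P(a − b) = (1/n!) · Σ_{k=0}^{n} (−1)^{n−k} · C(n,k) · P( k·a + (n−k)·b ), where C(n,k) is the binomial coefficient. -/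
open Polynomial in
private lemma coeff_taylor_sub (u : ℝ[X]) (n : ℕ) (h : u.natDegree ≤ n + 1) :
    (taylor 1 u - u).coeff n = (n + 1 : ℝ) * u.coeff (n + 1) := by
  have hq : (u.hasseDeriv n).natDegree < 2 :=
    lt_of_le_of_lt (u.natDegree_hasseDeriv_le n) (by omega)
  have he : (u.hasseDeriv n).eval 1 = (u.hasseDeriv n).coeff 0 + (u.hasseDeriv n).coeff 1 := by
    rw [Polynomial.eval_eq_sum_range' hq]
    simp [Finset.sum_range_succ]
  rw [Polynomial.coeff_sub, Polynomial.taylor_coeff, he,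
    Polynomial.hasseDeriv_coeff, Polynomial.hasseDeriv_coeff]
  simp only [zero_add, Nat.add_comm 1 n, Nat.choose_succ_self_right, Nat.choose_self,
    Nat.cast_one, Nat.cast_add, one_mul]
  ring

open Polynomial in
private lemma natDegree_taylor_sub (u : ℝ[X]) (n : ℕ) (h : u.natDegree ≤ n + 1) :
    (taylor 1 u - u).natDegree ≤ n := by
  rw [Polynomial.natDegree_le_iff_coeff_eq_zero]
  intro m hm
  have h0 : (u.hasseDeriv m).natDegree ≤ 0 := by
    have := u.natDegree_hasseDeriv_le m; omega
  have hc : u.hasseDeriv m = C (u.coeff m) := by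
    rw [Polynomial.eq_C_of_natDegree_le_zero h0, Polynomial.hasseDeriv_coeff]
    simp
  rw [Polynomial.coeff_sub, Polynomial.taylor_coeff, hc]
  simp

open Polynomial in
private lemma fwdDiff_iter_poly :
    ∀ (n : ℕ) (u : ℝ[X]), u.natDegree ≤ n →
      (fwdDiff (1 : ℝ))^[n] (fun x => u.eval x) 0 = (n.factorial : ℝ) * u.coeff n := by
  intro n
  induction n with
  | zero =>
    intro u hu
    simp [Polynomial.coeff_zero_eq_eval_zero]
  | succ n ih =>
    intro u hu
    have hstep : fwdDiff (1 : ℝ) (fun x => u.eval x) = fun x => (taylor 1 u - u).eval x := by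
      funext x
      simp [fwdDiff, Polynomial.taylor_eval]
    rw [Function.iterate_succ_apply, hstep, ih _ (natDegree_taylor_sub u n hu),
      coeff_taylor_sub u n hu, Nat.factorial_succ]
    push_cast
    ring

open Polynomial in
private lemma sum_choose_eval (n : ℕ) (u : ℝ[X]) (hu : u.natDegree ≤ n) :
    ∑ k ∈ Finset.range (n + 1), (-1 : ℝ) ^ (n - k) * (n.choose k : ℝ) * u.eval (k : ℝ)
      = (n.factorial : ℝ) * u.coeff n := by
  rw [← fwdDiff_iter_poly n u hu, fwdDiff_iter_eq_sum_shift]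
  refine Finset.sum_congr rfl fun k _ => ?_
  simp only [zero_add, nsmul_eq_mul, mul_one, zsmul_eq_mul]
  push_cast
  ring

/-- For a degree-`n` homogeneous polynomial `P` on an abelian group `G` and any
`a, b ∈ G`: `P (a - b) = (1/n!) ∑_{k=0}^{n} (-1)^{n-k} C(n,k) P (k • a + (n-k) • b)`. -/
theorem homogeneousPolynomial_extension_to_differences
    {G : Type*} [AddCommGroup G] (n : ℕ) (hn : 1 ≤ n)
    (P : G → ℝ) (hP : IsHomogeneousPolynomialOn n P) :
    ∀ a b : G,
      P (a - b) =
        (n.factorial : ℝ)⁻¹ *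
          ∑ k ∈ Finset.range (n + 1),
            (-1 : ℝ) ^ (n - k) * (n.choose k : ℝ) * P (k • a + (n - k) • b) := by
  intro a b
  obtain ⟨s, hs, hse⟩ := hP 2 ![a - b, b]
  -- every monomial of `s` has exponents summing to `n`
  have hdeg : ∀ d ∈ s.support, d 0 + d 1 = n := by
    intro d hd
    have h1 := hs (MvPolynomial.mem_support_iff.mp hd)
    rw [Finsupp.weight_apply, Finsupp.sum_fintype _ _ (fun i => by simp)] at h1
    simpa [Fin.sum_univ_two] using h1
  have key : ∀ k : Fin 2 → ℕ,
      P (k 0 • (a - b) + k 1 • b) = MvPolynomial.eval (fun i => (k i : ℝ)) s := by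
    intro k
    have := hse k
    simpa [Fin.sum_univ_two] using this
  have e10 : (fun i => (((![1, 0] : Fin 2 → ℕ)) i : ℝ)) = ![(1 : ℝ), 0] := by
    funext i; fin_cases i <;> simp
  have h1 : P (a - b) = MvPolynomial.eval ![(1 : ℝ), 0] s := by
    have := key ![1, 0]
    rw [e10] at this
    simpa using this
  have h2 : ∀ k : ℕ, k ≤ n →
      P (k • a + (n - k) • b) = MvPolynomial.eval ![(k : ℝ), (n : ℝ)] s := by
    intro k hk
    have ekn : (fun i => (((![k, n] : Fin 2 → ℕ)) i : ℝ)) = ![(k : ℝ), (n : ℝ)] := by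
      funext i; fin_cases i <;> simp
    have hG : k • a + (n - k) • b = k • (a - b) + n • b := by
      rw [smul_sub, sub_nsmul b hk]
      abel
    rw [hG]
    have := key ![k, n]
    rw [ekn] at this
    simpa using this
  -- the one-variable polynomial `x ↦ s(x, n)`
  set u : Polynomial ℝ :=
    MvPolynomial.eval₂ Polynomial.C ![Polynomial.X, Polynomial.C (n : ℝ)] s with hu
  have hA : ∀ x : ℝ, u.eval x = MvPolynomial.eval ![x, (n : ℝ)] s := by
    intro x
    have hcl := MvPolynomial.eval₂_comp_left (Polynomial.evalRingHom x) Polynomial.C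
      ![Polynomial.X, Polynomial.C (n : ℝ)] s
    have hid : (Polynomial.evalRingHom x).comp Polynomial.C = RingHom.id ℝ := by
      ext r; simp
    have hg : ((Polynomial.evalRingHom x) ∘ ![Polynomial.X, Polynomial.C (n : ℝ)])
        = ![x, (n : ℝ)] := by
      funext i; fin_cases i <;> simp
    rw [hid, hg] at hcl
    exact hcl
  have hprod : ∀ d : Fin 2 →₀ ℕ,
      (Polynomial.C (MvPolynomial.coeff d s) *
        ∏ i, (![Polynomial.X, Polynomial.C (n : ℝ)]) i ^ d i)
      = Polynomial.C (MvPolynomial.coeff d s * (n : ℝ) ^ d 1) * Polynomial.X ^ d 0 := by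
    intro d
    rw [Fin.prod_univ_two]
    simp [← Polynomial.C_pow]
    ring
  have hB : u.natDegree ≤ n := by
    rw [hu, MvPolynomial.eval₂_eq']
    refine Polynomial.natDegree_sum_le_of_forall_le _ _ fun d hd => ?_
    rw [hprod d]
    refine (Polynomial.natDegree_mul_le).trans ?_
    rw [Polynomial.natDegree_C, zero_add, Polynomial.natDegree_X_pow]
    have := hdeg d hd
    omega
  have hC : u.coeff n = MvPolynomial.eval ![(1 : ℝ), 0] s := by
    rw [hu, MvPolynomial.eval₂_eq', MvPolynomial.eval_eq', Polynomial.finset_sum_coeff]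
    refine Finset.sum_congr rfl fun d hd => ?_
    rw [hprod d, Polynomial.coeff_C_mul, Polynomial.coeff_X_pow, Fin.prod_univ_two]
    have hsd := hdeg d hd
    by_cases h0 : d 1 = 0
    · have hd0 : d 0 = n := by omega
      simp [h0, hd0]
    · have hd0 : n ≠ d 0 := by omega
      simp [if_neg hd0, zero_pow h0]
  have hsum : ∑ k ∈ Finset.range (n + 1),
        (-1 : ℝ) ^ (n - k) * (n.choose k : ℝ) * P (k • a + (n - k) • b)
      = ∑ k ∈ Finset.range (n + 1),
        (-1 : ℝ) ^ (n - k) * (n.choose k : ℝ) * u.eval (k : ℝ) := by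
    refine Finset.sum_congr rfl fun k hk => ?_
    rw [h2 k (Nat.lt_succ_iff.mp (Finset.mem_range.mp hk)), ← hA]
  rw [h1, hsum, sum_choose_eval n u hB, hC, ← mul_assoc,
    inv_mul_cancel₀ (by exact_mod_cast n.factorial_ne_zero), one_mul]
end
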